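/- Let σ be any stopping time with E σ < ∞. Then lim_{x→∞} δ_σ(x) = 0 if and only if lim_{x→∞} P(M_σ > x)/F̄(x) = E σ. -/

import Mathlib

open MeasureTheory ProbabilityTheory Filter Set
open scoped ENNReal ENat

noncomputable section

/-- The tail (right-tail) distribution function `F̄(x) = μ((x,∞))` of a law `μ` on `ℝ`. -/
def rtail (μ : Measure ℝ) (x : ℝ) : ℝ := (μ (Set.Ioi x)).toReal

/-- `μ` (with distribution function `F`) is long-tailed (LT): `F̄(x) > 0` for all `x` and
`F̄(x-h)/F̄(x) → 1` as `x → ∞` for every fixed `h > 0`. -/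
def LongTailed (μ : Measure ℝ) : Prop :=
  (∀ x : ℝ, 0 < μ (Set.Ioi x)) ∧
    ∀ h : ℝ, 0 < h →
      Filter.Tendsto (fun x : ℝ => rtail μ (x - h) / rtail μ x) Filter.atTop (nhds 1)

/-- The distribution `μ` (with distribution function `G`) belongs to the class `S*`:
`Ḡ(x) > 0` for all `x` and `∫_0^x Ḡ(x-y) Ḡ(y) dy ∼ 2 m_{G⁺} Ḡ(x)` as `x → ∞`,
where `m_{G⁺} = ∫_0^∞ Ḡ(t) dt`. -/
def MemSstar (μ : Measure ℝ) : Prop :=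
  (∀ x : ℝ, 0 < μ (Set.Ioi x)) ∧
    Filter.Tendsto
      (fun x : ℝ => (∫ y in (0:ℝ)..x, rtail μ (x - y) * rtail μ y) /
        (2 * (∫ y in Set.Ioi (0:ℝ), rtail μ y) * rtail μ x))
      Filter.atTop (nhds 1)

/-- The partial sums `S_n` of the random walk: `walk ξ n = ξ 0 + ⋯ + ξ (n-1)`,
where `ξ i` denotes the increment `ξ_{i+1}` of the paper (so `S_0 = 0`). -/
def walk {Ω : Type*} (ξ : ℕ → Ω → ℝ) (n : ℕ) (ω : Ω) : ℝ := ∑ i ∈ Finset.range n, ξ i ω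

/-- The event `A_{σ,2}(x) = {μ(x) ≤ σ, S_{μ(x)-1} > h(x)}`, where
`μ(x) = min{n : S_n > x}` is the first passage time over level `x`. -/
def eventA2 {Ω : Type*} (ξ : ℕ → Ω → ℝ) (σ : Ω → ℕ) (h : ℝ → ℝ) (x : ℝ) : Set Ω :=
  {ω | ∃ n : ℕ, n ≤ σ ω ∧ (∀ k, k < n → walk ξ k ω ≤ x) ∧ x < walk ξ n ω ∧
    h x < walk ξ (n - 1) ω}

/-- The event `A_{τ,2}(x)` with `τ = min{n ≥ 1 : S_n ≤ 0}`:  here `μ(x)` is the first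
passage time over level `x` and the requirement `μ(x) ≤ τ` is expressed by
`S_k > 0` for all `1 ≤ k < μ(x)`. -/
def eventA2tau {Ω : Type*} (ξ : ℕ → Ω → ℝ) (h : ℝ → ℝ) (x : ℝ) : Set Ω :=
  {ω | ∃ n : ℕ, (∀ k, 1 ≤ k → k < n → 0 < walk ξ k ω) ∧
    (∀ k, k < n → walk ξ k ω ≤ x) ∧ x < walk ξ n ω ∧ h x < walk ξ (n - 1) ω}

/-- `δ(x) = sup_{y ≥ x} P(A₂(y)) / F̄(y)` (valued in `ℝ≥0∞`). -/
def deltaSup {Ω : Type*} [MeasurableSpace Ω] (P : Measure Ω) (μ : Measure ℝ)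
    (A : ℝ → Set Ω) (x : ℝ) : ℝ≥0∞ :=
  ⨆ y ∈ Set.Ici x, P (A y) / μ (Set.Ioi y)

/-!
Split `{M_σ > x}` according to the first passage time `μ(x)` over `x`: it is the disjoint union
of `A_{σ,2}(x)` and of the events that the walk, still below `x` up to time `n < σ` and below
`h(x)` at time `n`, exceeds `x` at time `n + 1`. As `ξ_{n+1}` is independent of `F_n`, the
latter has probability `E[F̄(x - S_n); σ > n, S_n ≤ h(x), M_n ≤ x]`, which is
`~ P(σ > n) F̄(x)` by long-tailedness and dominated convergence, the bound
`F̄(x - h(x)) ≤ 2 F̄(x)` making this uniform in `n`. Summing, with `∑ P(σ > n) = E σ < ∞`,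
gives `P(A_{σ,1}(x)) ~ E σ F̄(x)`, so `P(M_σ > x) / F̄(x) → E σ` iff
`P(A_{σ,2}(x)) / F̄(x) → 0`, i.e. iff `δ_σ(x) → 0`.
-/

open Function Topology

lemma rtail_pos {μ : Measure ℝ} [IsFiniteMeasure μ] {x : ℝ} (hx : 0 < μ (Ioi x)) :
    0 < rtail μ x :=
  ENNReal.toReal_pos hx.ne' (measure_ne_top μ _)

lemma tendsto_measure_Ioi_div_of_tendsto_rtail_div {μ : Measure ℝ} [IsFiniteMeasure μ]
    (hpos : ∀ x, 0 < μ (Ioi x)) {l : Filter ℝ} {a : ℝ → ℝ}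
    (ha : Tendsto (fun x => rtail μ (a x) / rtail μ x) l (𝓝 1)) :
    Tendsto (fun x => μ (Ioi (a x)) / μ (Ioi x)) l (𝓝 1) := by
  have := ENNReal.tendsto_ofReal ha
  rw [ENNReal.ofReal_one] at this
  refine this.congr fun x => ?_
  rw [ENNReal.ofReal_div_of_pos (rtail_pos (hpos x)), rtail, rtail,
    ENNReal.ofReal_toReal (measure_ne_top μ _), ENNReal.ofReal_toReal (measure_ne_top μ _)]

lemma LongTailed.tendsto_rtail_sub_div {μ : Measure ℝ} [IsFiniteMeasure μ] (hlt : LongTailed μ)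
    (c : ℝ) : Tendsto (fun x => rtail μ (x - c) / rtail μ x) atTop (𝓝 1) := by
  rcases lt_trichotomy c 0 with hc | rfl | hc
  · -- for `c < 0` the ratio is the reciprocal of the defining one with shift `-c`, taken at `x - c`
    have := ((hlt.2 (-c) (neg_pos.2 hc)).comp
      (tendsto_atTop_add_const_right atTop (-c) tendsto_id)).inv₀ one_ne_zero
    simpa [Function.comp_def, inv_div, ← sub_eq_add_neg] using this
  · simp [div_self (rtail_pos (hlt.1 _)).ne']
  · exact hlt.2 c hc

lemma LongTailed.tendsto_measure_Ioi_sub_div {μ : Measure ℝ} [IsFiniteMeasure μ]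
    (hlt : LongTailed μ) (c : ℝ) :
    Tendsto (fun x => μ (Ioi (x - c)) / μ (Ioi x)) atTop (𝓝 1) :=
  tendsto_measure_Ioi_div_of_tendsto_rtail_div hlt.1 (hlt.tendsto_rtail_sub_div c)

lemma eventually_measure_Ioi_le_two_mul {μ : Measure ℝ} [IsFiniteMeasure μ]
    (hpos : ∀ x, 0 < μ (Ioi x)) {l : Filter ℝ} {a : ℝ → ℝ}
    (ha : Tendsto (fun x => rtail μ (a x) / rtail μ x) l (𝓝 1)) :
    ∀ᶠ x in l, μ (Ioi (a x)) ≤ 2 * μ (Ioi x) := by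
  filter_upwards [(tendsto_measure_Ioi_div_of_tendsto_rtail_div hpos ha).eventually
    (gt_mem_nhds ENNReal.one_lt_two)] with x hx
  exact ((ENNReal.div_lt_iff (.inl (hpos x).ne') (.inl (measure_ne_top μ _))).1 hx).le

lemma tendsto_toReal_div_rtail_iff {μ : Measure ℝ} [IsFiniteMeasure μ]
    (hpos : ∀ x, 0 < μ (Ioi x)) {l : Filter ℝ} {f : ℝ → ℝ≥0∞} (hf : ∀ x, f x ≠ ∞) {a : ℝ≥0∞}
    (ha : a ≠ ∞) :
    Tendsto (fun x => (f x).toReal / rtail μ x) l (𝓝 a.toReal) ↔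
      Tendsto (fun x => f x / μ (Ioi x)) l (𝓝 a) := by
  simp_rw [rtail, ← ENNReal.toReal_div]
  exact ENNReal.tendsto_toReal_iff (fun x => ENNReal.div_ne_top (hf x) (hpos x).ne') ha

lemma ENNReal.tendsto_tsum_of_dominated_convergence {α : Type*} {l : Filter α}
    [l.IsCountablyGenerated] {f : α → ℕ → ℝ≥0∞} {g bound : ℕ → ℝ≥0∞}
    (hbound : ∀ᶠ x in l, ∀ n, f x n ≤ bound n) (hsum : ∑' n, bound n ≠ ∞)
    (hlim : ∀ n, Tendsto (f · n) l (𝓝 (g n))) :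
    Tendsto (fun x => ∑' n, f x n) l (𝓝 (∑' n, g n)) := by
  simpa only [lintegral_count] using
    tendsto_lintegral_filter_of_dominated_convergence (μ := Measure.count) bound
      (.of_forall fun _ => measurable_from_nat) (hbound.mono fun _ hx => ae_of_all _ hx)
      (by rwa [lintegral_count]) (ae_of_all _ hlim)

lemma ENNReal.tendsto_add_nhds_iff_tendsto_nhds_zero {α : Type*} {l : Filter α}
    {f g : α → ℝ≥0∞} {a : ℝ≥0∞} (hf : Tendsto f l (𝓝 a)) (ha : a ≠ ∞) :
    Tendsto (fun x => f x + g x) l (𝓝 a) ↔ Tendsto g l (𝓝 0) := by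
  refine ⟨fun hfg => ?_, fun hg => by simpa using hf.add hg⟩
  have := ENNReal.Tendsto.sub hfg hf (.inl ha)
  rw [tsub_self] at this
  refine this.congr' ?_
  filter_upwards [hf.eventually (gt_mem_nhds ha.lt_top)] with x hfx
  exact ENNReal.add_sub_cancel_left hfx.ne

lemma ENNReal.tendsto_biSup_Ici_nhds_zero_iff {α : Type*} [SemilatticeSup α] [Nonempty α]
    {f : α → ℝ≥0∞} :
    Tendsto (fun x => ⨆ y ∈ Ici x, f y) atTop (𝓝 0) ↔ Tendsto f atTop (𝓝 0) := by
  refine ⟨fun h => tendsto_of_tendsto_of_tendsto_of_le_of_le tendsto_const_nhds h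
    (fun _ => bot_le) fun x => le_biSup f (mem_Ici.2 le_rfl), fun h => ?_⟩
  refine ENNReal.tendsto_nhds_zero.2 fun ε hε => ?_
  obtain ⟨a, ha⟩ := eventually_atTop.1 (ENNReal.tendsto_nhds_zero.1 h ε hε)
  exact eventually_atTop.2 ⟨a, fun x hx => iSup₂_le fun y hy => ha y (hx.trans hy)⟩

lemma tsum_measure_lt_eq_lintegral {Ω : Type*} [MeasurableSpace Ω] (P : Measure Ω) {σ : Ω → ℕ}
    (hσ : ∀ n, MeasurableSet {ω | n < σ ω}) :
    ∑' n, P {ω | n < σ ω} = ∫⁻ ω, (σ ω : ℝ≥0∞) ∂P := by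
  have hind : ∀ ω, ∑' n, {ω | n < σ ω}.indicator (1 : Ω → ℝ≥0∞) ω = σ ω := fun ω => by
    have : ∀ n, {ω | n < σ ω}.indicator (1 : Ω → ℝ≥0∞) ω = (Iio (σ ω)).indicator 1 n :=
      fun n => by simp [indicator_apply]
    rw [tsum_congr this, ← tsum_subtype]
    simp
  simp_rw [← hind, ← lintegral_indicator_one (hσ _)]
  exact (lintegral_tsum fun n => (measurable_one.indicator (hσ n)).aemeasurable).symm

lemma measure_inter_lt_add_eq_setLIntegral {Ω : Type*} {m mΩ : MeasurableSpace Ω}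
    {P : Measure Ω} [IsFiniteMeasure P] (hm : m ≤ mΩ) {T X : Ω → ℝ} (hT : Measurable[m] T)
    (hX : Measurable X) (hind : Indep (MeasurableSpace.comap X inferInstance) m P)
    {B : Set Ω} (hB : MeasurableSet[m] B) (x : ℝ) :
    P (B ∩ {ω | x < T ω + X ω}) = ∫⁻ ω in B, P.map X (Ioi (x - T ω)) ∂P := by
  have hT' : Measurable T := hT.mono hm le_rfl
  have hTX : Measurable fun ω => (T ω, X ω) := hT'.prodMk hX
  have hprod :
      (P.restrict B).map (fun ω => (T ω, X ω)) = ((P.restrict B).map T).prod (P.map X) := by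
    refine (Measure.prod_eq fun s t hs ht => ?_).symm
    rw [Measure.map_apply hTX (hs.prod ht), Measure.map_apply hT' hs, Measure.map_apply hX ht,
      Measure.restrict_apply' (hm _ hB), Measure.restrict_apply' (hm _ hB), mul_comm,
      ← (Indep_iff _ _ P).1 hind _ _ ⟨t, ht, rfl⟩ ((hT hs).inter hB)]
    congr 1
    ext ω
    simp only [mem_inter_iff, mem_preimage, mem_prod]
    tauto
  have hC : MeasurableSet {p : ℝ × ℝ | x < p.1 + p.2} :=
    measurableSet_lt measurable_const (measurable_fst.add measurable_snd)
  calc P (B ∩ {ω | x < T ω + X ω})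
      = (P.restrict B).map (fun ω => (T ω, X ω)) {p | x < p.1 + p.2} := by
        rw [Measure.map_apply hTX hC, Measure.restrict_apply' (hm _ hB), inter_comm]
        rfl
    _ = ∫⁻ t, P.map X (Prod.mk t ⁻¹' {p | x < p.1 + p.2}) ∂(P.restrict B).map T := by
        rw [hprod, Measure.prod_apply hC]
    _ = ∫⁻ ω in B, P.map X (Ioi (x - T ω)) ∂P := by
        rw [lintegral_map (measurable_measure_prodMk_left hC) hT']
        refine lintegral_congr fun ω => congrArg _ (ext fun y => ?_)
        simp only [mem_preimage, mem_ofPred_eq, mem_Ioi, sub_lt_iff_lt_add']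

section Walk

variable {Ω : Type*} {ξ : ℕ → Ω → ℝ}

@[simp] lemma walk_zero (ω : Ω) : walk ξ 0 ω = 0 := by simp [walk]

lemma walk_succ (n : ℕ) (ω : Ω) : walk ξ (n + 1) ω = walk ξ n ω + ξ n ω :=
  Finset.sum_range_succ _ _

lemma le_of_forall_walk_le_of_lt_walk {x : ℝ} {ω : Ω} {n k : ℕ}
    (hbelow : ∀ i, i < n → walk ξ i ω ≤ x) (habove : x < walk ξ k ω) : n ≤ k :=
  not_lt.1 fun hk => (hbelow k hk).not_gt habove

lemma measurable_walk [MeasurableSpace Ω] (hξ : ∀ n, Measurable (ξ n)) (n : ℕ) :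
    Measurable (walk ξ n) :=
  Finset.measurable_sum _ fun i _ => hξ i

lemma measurable_walk_of_le {𝓕 : ℕ → MeasurableSpace Ω} (hmono : Monotone 𝓕)
    (hadapt : ∀ n, Measurable[𝓕 (n + 1)] (ξ n)) {n m : ℕ} (hnm : n ≤ m) :
    Measurable[𝓕 m] (walk ξ n) :=
  Finset.measurable_sum _ fun i hi =>
    (hadapt i).mono (hmono (by rw [Finset.mem_range] at hi; omega)) le_rfl

end Walk

section BigJump

variable {Ω : Type*} (ξ : ℕ → Ω → ℝ) (σ : Ω → ℕ) (h : ℝ → ℝ)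

def preJump (n : ℕ) (x : ℝ) : Set Ω :=
  {ω | n < σ ω ∧ (∀ k, k < n + 1 → walk ξ k ω ≤ x) ∧ walk ξ n ω ≤ h x}

/-- The walk first exceeds `x` at time `n + 1 ≤ σ`, jumping from a level at most `h x`;
the union over `n` is the paper's `A_{σ,1}(x) = {μ(x) ≤ σ, S_{μ(x)-1} ≤ h(x)}`. -/
def bigJump (n : ℕ) (x : ℝ) : Set Ω :=
  preJump ξ σ h n x ∩ {ω | x < walk ξ (n + 1) ω}

lemma pairwise_disjoint_bigJump (x : ℝ) :
    Pairwise (Disjoint on fun n => bigJump ξ σ h n x) := by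
  intro n k hnk
  refine disjoint_left.2 fun ω ⟨⟨_, hn, _⟩, hxn⟩ ⟨⟨_, hk, _⟩, hxk⟩ => hnk ?_
  have := le_antisymm (le_of_forall_walk_le_of_lt_walk hn hxk)
    (le_of_forall_walk_le_of_lt_walk hk hxn)
  omega

lemma disjoint_iUnion_bigJump_eventA2 (x : ℝ) :
    Disjoint (⋃ n, bigJump ξ σ h n x) (eventA2 ξ σ h x) := by
  refine disjoint_left.2 fun ω hω ⟨k, _, hk, hxk, hhk⟩ => ?_
  obtain ⟨n, ⟨_, hn, hnh⟩, hxn⟩ := mem_iUnion.1 hω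
  obtain rfl : k = n + 1 := le_antisymm (le_of_forall_walk_le_of_lt_walk hk hxn)
    (le_of_forall_walk_le_of_lt_walk hn hxk)
  rw [Nat.add_sub_cancel] at hhk
  linarith

lemma setOf_exists_lt_walk_eq_union {x : ℝ} (hx : 0 ≤ x) :
    {ω | ∃ i : ℕ, i ≤ σ ω ∧ x < walk ξ i ω} =
      (⋃ n, bigJump ξ σ h n x) ∪ eventA2 ξ σ h x := by
  ext ω
  constructor
  · rintro ⟨i, hiσ, hxi⟩
    have hex : ∃ k, x < walk ξ k ω := ⟨i, hxi⟩
    obtain ⟨k, habove, hbelow⟩ : ∃ k, x < walk ξ k ω ∧ ∀ j, j < k → walk ξ j ω ≤ x :=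
      ⟨Nat.find hex, Nat.find_spec hex, fun j hj => not_lt.1 (Nat.find_min hex hj)⟩
    have hσ : k ≤ σ ω := (le_of_forall_walk_le_of_lt_walk hbelow hxi).trans hiσ
    rcases k with _ | n
    · rw [walk_zero] at habove
      linarith
    by_cases hjump : walk ξ n ω ≤ h x
    · exact .inl (mem_iUnion.2 ⟨n, ⟨hσ, hbelow, hjump⟩, habove⟩)
    · exact .inr ⟨n + 1, hσ, hbelow, habove, by simpa using hjump⟩
  · rintro (hω | ⟨k, hkσ, -, hxk, -⟩)
    · obtain ⟨n, ⟨hnσ, -, -⟩, hxn⟩ := mem_iUnion.1 hω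
      exact ⟨n + 1, hnσ, hxn⟩
    · exact ⟨k, hkσ, hxk⟩

lemma measurableSet_lt_of_measurableSet_le {m : MeasurableSpace Ω} {n : ℕ}
    (hσ : MeasurableSet {ω | σ ω ≤ n}) : MeasurableSet {ω | n < σ ω} := by
  simpa only [compl_ofPred, not_le] using hσ.compl

lemma measurableSet_preJump [MeasurableSpace Ω] {𝓕 : ℕ → MeasurableSpace Ω}
    (hmono : Monotone 𝓕) (hadapt : ∀ n, Measurable[𝓕 (n + 1)] (ξ n))
    (hstop : ∀ n, MeasurableSet[𝓕 n] {ω | σ ω ≤ n}) (n : ℕ) (x : ℝ) :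
    MeasurableSet[𝓕 n] (preJump ξ σ h n x) := by
  have hbelow : MeasurableSet[𝓕 n] {ω | ∀ k, k < n + 1 → walk ξ k ω ≤ x} := by
    simp only [ofPred_forall]
    exact .iInter fun k => .iInter fun hk =>
      measurableSet_le (measurable_walk_of_le hmono hadapt (by omega)) measurable_const
  exact (measurableSet_lt_of_measurableSet_le σ (hstop n)).inter (hbelow.inter
    (measurableSet_le (measurable_walk_of_le hmono hadapt le_rfl) measurable_const))

lemma measurableSet_bigJump [MeasurableSpace Ω] {𝓕 : ℕ → MeasurableSpace Ω}
    (hmono : Monotone 𝓕) (hle : ∀ n, 𝓕 n ≤ ‹MeasurableSpace Ω›)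
    (hadapt : ∀ n, Measurable[𝓕 (n + 1)] (ξ n))
    (hstop : ∀ n, MeasurableSet[𝓕 n] {ω | σ ω ≤ n}) (n : ℕ) (x : ℝ) :
    MeasurableSet (bigJump ξ σ h n x) :=
  (hle n _ (measurableSet_preJump ξ σ h hmono hadapt hstop n x)).inter
    (measurableSet_lt measurable_const
      ((measurable_walk_of_le hmono hadapt le_rfl).mono (hle _) le_rfl))

lemma measure_setOf_exists_lt_walk [MeasurableSpace Ω] (P : Measure Ω) {x : ℝ} (hx : 0 ≤ x)
    (hB : ∀ n, MeasurableSet (bigJump ξ σ h n x)) :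
    P {ω | ∃ i : ℕ, i ≤ σ ω ∧ x < walk ξ i ω} =
      ∑' n, P (bigJump ξ σ h n x) + P (eventA2 ξ σ h x) := by
  rw [setOf_exists_lt_walk_eq_union ξ σ h hx,
    measure_union' (disjoint_iUnion_bigJump_eventA2 ξ σ h x) (.iUnion hB),
    measure_iUnion (pairwise_disjoint_bigJump ξ σ h x) hB]

end BigJump

section TailIntegral

variable {Ω : Type*} [MeasurableSpace Ω] {P : Measure Ω} {μ : Measure ℝ} {h : ℝ → ℝ}
  {S : Ω → ℝ}

lemma setLIntegral_measure_Ioi_sub_le {B : Set Ω} {x : ℝ} (hB : MeasurableSet B)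
    (hS : ∀ ω ∈ B, S ω ≤ h x) :
    ∫⁻ ω in B, μ (Ioi (x - S ω)) ∂P ≤ μ (Ioi (x - h x)) * P B := by
  rw [← setLIntegral_const]
  exact setLIntegral_mono' hB fun ω hω =>
    measure_mono (Ioi_subset_Ioi (by linarith [hS ω hω]))

lemma tendsto_setLIntegral_measure_Ioi_sub_div [IsFiniteMeasure P] [IsFiniteMeasure μ]
    (hlt : LongTailed μ) {C : ℝ≥0∞} (hC : C ≠ ∞)
    (hdom : ∀ᶠ x in atTop, μ (Ioi (x - h x)) ≤ C * μ (Ioi x)) (hSm : Measurable S)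
    {B : ℝ → Set Ω} {E : Set Ω} (hB : ∀ x, MeasurableSet (B x)) (hE : MeasurableSet E)
    (hBE : ∀ x, B x ⊆ E) (hEB : ∀ ω ∈ E, ∀ᶠ x in atTop, ω ∈ B x)
    (hS : ∀ x, ∀ ω ∈ B x, S ω ≤ h x) :
    Tendsto (fun x => (∫⁻ ω in B x, μ (Ioi (x - S ω)) ∂P) / μ (Ioi x)) atTop (𝓝 (P E)) := by
  have hFm : Measurable fun t : ℝ => μ (Ioi t) :=
    Antitone.measurable fun _ _ hst => measure_mono (Ioi_subset_Ioi hst)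
  have hm : ∀ x, Measurable fun ω => μ (Ioi (x - S ω)) / μ (Ioi x) := fun x =>
    (hFm.comp (measurable_const.sub hSm)).div_const _
  have hlim := tendsto_lintegral_filter_of_dominated_convergence (μ := P) (l := atTop)
    (F := fun x => (B x).indicator fun ω => μ (Ioi (x - S ω)) / μ (Ioi x))
    (f := E.indicator 1) (fun _ => C) (.of_forall fun x => (hm x).indicator (hB x)) ?bound
    (by simpa using ENNReal.mul_ne_top hC (measure_ne_top P univ)) (ae_of_all _ ?pointwise)
  · rw [lintegral_indicator_one hE] at hlim
    refine hlim.congr fun x => ?_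
    simp_rw [lintegral_indicator (hB x), div_eq_mul_inv]
    exact lintegral_mul_const _ (hFm.comp (measurable_const.sub hSm))
  case bound =>
    filter_upwards [hdom] with x hx
    refine ae_of_all _ fun ω => ?_
    by_cases hω : ω ∈ B x
    · rw [indicator_of_mem hω]
      refine ENNReal.div_le_of_le_mul (le_trans (measure_mono (Ioi_subset_Ioi ?_)) hx)
      linarith [hS x ω hω]
    · simp [indicator_of_notMem hω]
  case pointwise =>
    intro ω
    by_cases hω : ω ∈ E
    · rw [indicator_of_mem hω, Pi.one_apply]
      refine (hlt.tendsto_measure_Ioi_sub_div (S ω)).congr' ?_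
      filter_upwards [hEB ω hω] with x hx
      rw [indicator_of_mem hx]
    · simp [indicator_of_notMem hω, indicator_of_notMem fun h => hω (hBE _ h)]

end TailIntegral

section BigJumpMeasure

variable {Ω : Type*} [MeasurableSpace Ω] {P : Measure Ω} [IsFiniteMeasure P] {ξ : ℕ → Ω → ℝ}
  {μ : Measure ℝ} {σ : Ω → ℕ} {h : ℝ → ℝ}

lemma measure_bigJump_eq (hmeas : ∀ n, Measurable (ξ n)) (hlaw : ∀ n, P.map (ξ n) = μ)
    {𝓕 : ℕ → MeasurableSpace Ω} (hmono : Monotone 𝓕) (hle : ∀ n, 𝓕 n ≤ ‹MeasurableSpace Ω›)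
    (hadapt : ∀ n, Measurable[𝓕 (n + 1)] (ξ n))
    (hindep : ∀ n, Indep (MeasurableSpace.comap (ξ n) inferInstance) (𝓕 n) P)
    (hstop : ∀ n, MeasurableSet[𝓕 n] {ω | σ ω ≤ n}) (n : ℕ) (x : ℝ) :
    P (bigJump ξ σ h n x) = ∫⁻ ω in preJump ξ σ h n x, μ (Ioi (x - walk ξ n ω)) ∂P := by
  simpa only [bigJump, walk_succ, hlaw n] using
    measure_inter_lt_add_eq_setLIntegral (hle n) (measurable_walk_of_le hmono hadapt le_rfl)
      (hmeas n) (hindep n) (measurableSet_preJump ξ σ h hmono hadapt hstop n x) x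

lemma tendsto_tsum_measure_bigJump_div [IsFiniteMeasure μ] (hmeas : ∀ n, Measurable (ξ n))
    (hlaw : ∀ n, P.map (ξ n) = μ) {𝓕 : ℕ → MeasurableSpace Ω} (hmono : Monotone 𝓕)
    (hle : ∀ n, 𝓕 n ≤ ‹MeasurableSpace Ω›) (hadapt : ∀ n, Measurable[𝓕 (n + 1)] (ξ n))
    (hindep : ∀ n, Indep (MeasurableSpace.comap (ξ n) inferInstance) (𝓕 n) P)
    (hstop : ∀ n, MeasurableSet[𝓕 n] {ω | σ ω ≤ n}) (hσ : ∑' n, P {ω | n < σ ω} ≠ ∞)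
    (hlt : LongTailed μ) (hh : Tendsto h atTop atTop) {C : ℝ≥0∞} (hC : C ≠ ∞)
    (hdom : ∀ᶠ x in atTop, μ (Ioi (x - h x)) ≤ C * μ (Ioi x)) :
    Tendsto (fun x => ∑' n, P (bigJump ξ σ h n x) / μ (Ioi x)) atTop
      (𝓝 (∑' n, P {ω | n < σ ω})) := by
  have hkey := measure_bigJump_eq (h := h) hmeas hlaw hmono hle hadapt hindep hstop
  have hB n x : MeasurableSet (preJump ξ σ h n x) :=
    hle n _ (measurableSet_preJump ξ σ h hmono hadapt hstop n x)
  have hσm n : MeasurableSet {ω | n < σ ω} :=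
    hle n _ (measurableSet_lt_of_measurableSet_le σ (hstop n))
  refine ENNReal.tendsto_tsum_of_dominated_convergence
    (bound := fun n => C * P {ω | n < σ ω}) ?_
    (by rw [ENNReal.tsum_mul_left]; exact ENNReal.mul_ne_top hC hσ) fun n => ?_
  · filter_upwards [hdom] with x hx n
    rw [hkey]
    refine ENNReal.div_le_of_le_mul ?_
    calc _ ≤ μ (Ioi (x - h x)) * P (preJump ξ σ h n x) :=
          setLIntegral_measure_Ioi_sub_le (hB n x) fun ω hω => hω.2.2
      _ ≤ C * μ (Ioi x) * P {ω | n < σ ω} := by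
          gcongr
          exact fun ω hω => hω.1
      _ = C * P {ω | n < σ ω} * μ (Ioi x) := by ring
  · simp_rw [hkey]
    refine tendsto_setLIntegral_measure_Ioi_sub_div hlt hC hdom (measurable_walk hmeas n)
      (hB n) (hσm n) (fun x ω hω => hω.1) (fun ω hω => ?_) (fun x ω hω => hω.2.2)
    have hbelow : ∀ᶠ x in atTop, ∀ k ∈ Finset.range (n + 1), walk ξ k ω ≤ x :=
      (eventually_all_finset _).2 fun k _ => eventually_ge_atTop _
    filter_upwards [hbelow, hh.eventually_ge_atTop (walk ξ n ω)] with x hx hhx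
    exact ⟨hω, fun k hk => hx k (Finset.mem_range.2 hk), hhx⟩

end BigJumpMeasure

theorem deltaSigma_iff_max_asymptotics_general
    {Ω : Type*} [MeasurableSpace Ω] (P : Measure Ω) [IsProbabilityMeasure P]
    (ξ : ℕ → Ω → ℝ) (μ : Measure ℝ) [IsProbabilityMeasure μ]
    (hmeas : ∀ n, Measurable (ξ n))
    (hlaw : ∀ n, P.map (ξ n) = μ)
    (hlt : LongTailed μ)
    (h : ℝ → ℝ)
    (hh2 : Filter.Tendsto h Filter.atTop Filter.atTop)
    (hh3 : Filter.Tendsto (fun x => rtail μ (x - h x) / rtail μ x) Filter.atTop (nhds 1))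
    (𝓕 : ℕ → MeasurableSpace Ω) (hFmono : Monotone 𝓕)
    (hFle : ∀ n, 𝓕 n ≤ ‹MeasurableSpace Ω›)
    (hFadapt : ∀ n, Measurable[𝓕 (n + 1)] (ξ n))
    (hFindep : ∀ n, Indep (MeasurableSpace.comap (ξ n) inferInstance) (𝓕 n) P)
    (σ : Ω → ℕ) (hstop : ∀ n : ℕ, MeasurableSet[𝓕 n] {ω | σ ω ≤ n})
    (hσint : Integrable (fun ω => (σ ω : ℝ)) P) :
    Filter.Tendsto (deltaSup P μ (eventA2 ξ σ h)) Filter.atTop (nhds 0)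
      ↔ Filter.Tendsto
          (fun x : ℝ => (P {ω | ∃ i : ℕ, i ≤ σ ω ∧ x < walk ξ i ω}).toReal / rtail μ x)
          Filter.atTop (nhds (∫ ω, (σ ω : ℝ) ∂P)) := by
  have hEσ : ∑' n, P {ω | n < σ ω} = ENNReal.ofReal (∫ ω, (σ ω : ℝ) ∂P) := by
    rw [tsum_measure_lt_eq_lintegral P fun n =>
        hFle n _ (measurableSet_lt_of_measurableSet_le σ (hstop n)),
      ofReal_integral_eq_lintegral_ofReal hσint (ae_of_all _ fun _ => Nat.cast_nonneg _)]
    simp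
  have hEσ_ne : ∑' n, P {ω | n < σ ω} ≠ ∞ := hEσ ▸ ENNReal.ofReal_ne_top
  have hA1 := tendsto_tsum_measure_bigJump_div hmeas hlaw hFmono hFle hFadapt hFindep hstop
    hEσ_ne hlt hh2 ENNReal.ofNat_ne_top (eventually_measure_Ioi_le_two_mul hlt.1 hh3)
  have hsplit : ∀ᶠ x in atTop, P {ω | ∃ i : ℕ, i ≤ σ ω ∧ x < walk ξ i ω} / μ (Ioi x) =
      ∑' n, P (bigJump ξ σ h n x) / μ (Ioi x) + P (eventA2 ξ σ h x) / μ (Ioi x) := by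
    filter_upwards [eventually_ge_atTop 0] with x hx
    rw [measure_setOf_exists_lt_walk ξ σ h P hx
        fun n => measurableSet_bigJump ξ σ h hFmono hFle hFadapt hstop n x, ENNReal.add_div]
    simp only [div_eq_mul_inv, ENNReal.tsum_mul_right]
  unfold deltaSup
  rw [ENNReal.tendsto_biSup_Ici_nhds_zero_iff,
    ← ENNReal.toReal_ofReal (integral_nonneg fun ω => Nat.cast_nonneg (σ ω)), ← hEσ,
    tendsto_toReal_div_rtail_iff hlt.1 (fun _ => measure_ne_top P _) hEσ_ne,
    tendsto_congr' hsplit, ENNReal.tendsto_add_nhds_iff_tendsto_nhds_zero hA1 hEσ_ne]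

/-- **Lemma 5** (Foss–Zachary).  Under NEG and LT, let `σ` be any stopping time with
`E σ < ∞`.  Then `δ_σ(x) → 0` as `x → ∞` if and only if
`P(M_σ > x)/F̄(x) → E σ` as `x → ∞`. -/
theorem deltaSigma_iff_max_asymptotics
    {Ω : Type*} [MeasurableSpace Ω] (P : Measure Ω) [IsProbabilityMeasure P]
    (ξ : ℕ → Ω → ℝ) (μ : Measure ℝ) [IsProbabilityMeasure μ]
    (hmeas : ∀ n, Measurable (ξ n))
    (hlaw : ∀ n, P.map (ξ n) = μ)
    (hiid : iIndepFun ξ P)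
    (m : ℝ) (hm : 0 < m) (hint : Integrable id μ) (hmean : (∫ x, x ∂μ) = -m)
    (hlt : LongTailed μ)
    (h : ℝ → ℝ) (hh0 : ∀ x, 0 ≤ h x) (hh1 : ∀ x, 0 ≤ x → h x ≤ x / 2)
    (hh2 : Filter.Tendsto h Filter.atTop Filter.atTop)
    (hh3 : Filter.Tendsto (fun x => rtail μ (x - h x) / rtail μ x) Filter.atTop (nhds 1))
    (hh4 : ∃ x₀ : ℝ, ∀ x t : ℝ, x₀ ≤ x → 0 ≤ t → h (x + t) ≤ h x + t)
    (𝓕 : ℕ → MeasurableSpace Ω) (hFmono : Monotone 𝓕)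
    (hFle : ∀ n, 𝓕 n ≤ ‹MeasurableSpace Ω›)
    (hFadapt : ∀ n, Measurable[𝓕 (n + 1)] (ξ n))
    (hFindep : ∀ n, Indep (MeasurableSpace.comap (ξ n) inferInstance) (𝓕 n) P)
    (σ : Ω → ℕ) (hstop : ∀ n : ℕ, MeasurableSet[𝓕 n] {ω | σ ω ≤ n})
    (hσint : Integrable (fun ω => (σ ω : ℝ)) P) :
    Filter.Tendsto (deltaSup P μ (eventA2 ξ σ h)) Filter.atTop (nhds 0)
      ↔ Filter.Tendsto
          (fun x : ℝ => (P {ω | ∃ i : ℕ, i ≤ σ ω ∧ x < walk ξ i ω}).toReal / rtail μ x)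
          Filter.atTop (nhds (∫ ω, (σ ω : ℝ) ∂P)) :=
  deltaSigma_iff_max_asymptotics_general P ξ μ hmeas hlaw hlt h hh2 hh3 𝓕 hFmono hFle hFadapt
    hFindep σ hstop hσint
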